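/- arXiv:1907.11327 — 4 statements merged into one kernel-verified Lean document; each statement's English description precedes it below -/
import Mathlib

section
/- For β·q > 0 and γ ∈ (0,1), the inequality (1/(β q))·((1 - γ^(β q))/γ^(β q)) ≤ γ^(-1)·ln(γ^(-1)) holds. Equivalently, the function f(x) = x·ln(x) - (1/(βq))·(x^(βq) - 1) is increasing on [1,∞) with f(1) = 0, provided βq ≤ 1. -/
open Set

theorem stmt3 (β q γ : ℝ) (hβ0 : 0 < β) (hβ1 : β < 1) (hq : 1 ≤ q) (hβq : β * q ≤ 1)
    (hγ0 : 0 < γ) (hγ1 : γ < 1) :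
    (1 / (β * q)) * ((1 - γ ^ (β * q)) / γ ^ (β * q)) ≤ γ⁻¹ * Real.log γ⁻¹ ∧
    MonotoneOn (fun x : ℝ => x * Real.log x - (1 / (β * q)) * (x ^ (β * q) - 1))
      (Ici (1:ℝ)) ∧
    (1 : ℝ) * Real.log 1 - (1 / (β * q)) * ((1:ℝ) ^ (β * q) - 1) = 0 := by
  set a := β * q with ha_def
  have ha0 : 0 < a := mul_pos hβ0 (lt_of_lt_of_le one_pos hq)
  set f : ℝ → ℝ := fun x => x * Real.log x - (1 / a) * (x ^ a - 1) with hf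
  have hderiv : ∀ x ∈ interior (Ici (1:ℝ)),
      HasDerivAt f (Real.log x + 1 - x ^ (a - 1)) x := by
    intro x hx
    rw [interior_Ici] at hx
    have hx0 : (0:ℝ) < x := lt_trans one_pos hx
    have h1 : HasDerivAt (fun x : ℝ => x * Real.log x) (Real.log x + 1) x :=
      Real.hasDerivAt_mul_log (ne_of_gt hx0)
    have h2 : HasDerivAt (fun x : ℝ => x ^ a) (a * x ^ (a - 1)) x :=
      Real.hasDerivAt_rpow_const (Or.inl (ne_of_gt hx0))
    have h3 := h1.sub (((h2.sub_const 1)).const_mul (1 / a))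
    have e : Real.log x + 1 - x ^ (a - 1) = Real.log x + 1 - 1 / a * (a * x ^ (a - 1)) := by
      rw [← mul_assoc, one_div_mul_cancel ha0.ne', one_mul]
    rw [e]
    exact h3
  have hmono : MonotoneOn f (Ici (1:ℝ)) := by
    apply monotoneOn_of_deriv_nonneg (convex_Ici 1)
    · apply ContinuousOn.sub
      · exact continuousOn_id.mul (Real.continuousOn_log.mono (by
          intro x hx
          simp only [mem_Ici] at hx
          simp only [mem_compl_iff, mem_singleton_iff]
          intro h; rw [h] at hx; linarith))
      · refine ContinuousOn.mul continuousOn_const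
          (ContinuousOn.sub (ContinuousOn.rpow_const continuousOn_id ?_) continuousOn_const)
        intro x hx
        left
        simp only [mem_Ici] at hx
        intro h; rw [h] at hx; linarith
    · intro x hx
      exact (hderiv x hx).differentiableAt.differentiableWithinAt
    · intro x hx
      rw [(hderiv x hx).deriv]
      rw [interior_Ici] at hx
      have h1 : x ^ (a - 1) ≤ 1 :=
        Real.rpow_le_one_of_one_le_of_nonpos (le_of_lt hx) (by linarith)
      have h2 : 0 ≤ Real.log x := Real.log_nonneg (le_of_lt hx)
      linarith
  have hone : f 1 = 0 := by simp [hf]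
  refine ⟨?_, hmono, by simp⟩
  have hγinv : (1:ℝ) ≤ γ⁻¹ := by
    rw [le_inv_comm₀ one_pos hγ0]
    simpa using hγ1.le
  have hle := hmono (mem_Ici.mpr le_rfl) (mem_Ici.mpr hγinv) hγinv
  rw [hone] at hle
  simp only [hf] at hle
  have hγa : (0:ℝ) < γ ^ a := Real.rpow_pos_of_pos hγ0 a
  have hkey : (1 - γ ^ a) / γ ^ a = (γ⁻¹) ^ a - 1 := by
    rw [Real.inv_rpow hγ0.le]
    field_simp
  rw [hkey]
  linarith
end

section
/- Let f ∈ L¹(Q) for a set Q of finite positive measure, with decreasing rearrangement f*. Then (1/|Q|)∫_Q |f(y)|·log(e + |f(y)|/A) dy ≤ (1/|Q|)∫₀^{|Q|} f*(s)·log(e + |Q|/s) ds, where A = (1/|Q|)∫_Q |f|. -/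
open Set MeasureTheory

/-- The decreasing rearrangement of `f` with respect to the measure `μ`. -/
noncomputable def decreasingRearrangement {α : Type*} [MeasurableSpace α]
    (μ : Measure α) (f : α → ℝ) (s : ℝ) : ℝ :=
  sInf {t : ℝ | 0 ≤ t ∧ (μ {x | t < |f x|}).toReal ≤ s}

section Aux
variable {α : Type*} [MeasurableSpace α] {μ : Measure α} {f : α → ℝ}

lemma dr_nonneg (μ : Measure α) (f : α → ℝ) (s : ℝ) :
    0 ≤ decreasingRearrangement μ f s :=
  Real.sInf_nonneg (fun _ ht => ht.1)

lemma markov' (hf : Integrable f μ) {t : ℝ} (ht : 0 < t) :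
    μ {x | t < |f x|} ≤ ENNReal.ofReal ((∫ x, |f x| ∂μ) / t) := by
  have h := mul_meas_ge_le_lintegral₀ (f := fun x => ENNReal.ofReal |f x|)
    ((hf.abs.aemeasurable.ennreal_ofReal)) (ENNReal.ofReal t)
  have h2 : ∫⁻ x, ENNReal.ofReal |f x| ∂μ = ENNReal.ofReal (∫ x, |f x| ∂μ) :=
    (ofReal_integral_eq_lintegral_ofReal hf.abs
      (Filter.Eventually.of_forall fun x => abs_nonneg _)).symm
  have h3 : μ {x | t < |f x|} ≤ μ {x | ENNReal.ofReal t ≤ ENNReal.ofReal |f x|} :=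
    measure_mono fun x hx => ENNReal.ofReal_le_ofReal (le_of_lt hx)
  have h4 : ENNReal.ofReal t * μ {x | t < |f x|} ≤ ENNReal.ofReal (∫ x, |f x| ∂μ) := by
    calc ENNReal.ofReal t * μ {x | t < |f x|}
        ≤ ENNReal.ofReal t * μ {x | ENNReal.ofReal t ≤ ENNReal.ofReal |f x|} := by
          exact mul_le_mul_right h3 _
      _ ≤ ∫⁻ x, ENNReal.ofReal |f x| ∂μ := h
      _ = _ := h2
  rw [ENNReal.ofReal_div_of_pos ht]
  rw [ENNReal.le_div_iff_mul_le (Or.inl (by simpa using ht)) (Or.inl ENNReal.ofReal_ne_top)]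
  rwa [mul_comm]

lemma dr_le_iff [IsFiniteMeasure μ] (hf : Integrable f μ) {s t : ℝ} (hs : 0 < s) (ht : 0 ≤ t) :
    decreasingRearrangement μ f s ≤ t ↔ μ {x | t < |f x|} ≤ ENNReal.ofReal s := by
  set S : Set ℝ := {t : ℝ | 0 ≤ t ∧ (μ {x | t < |f x|}).toReal ≤ s} with hS
  have hmem : ∀ t' : ℝ, 0 ≤ t' → (t' ∈ S ↔ μ {x | t' < |f x|} ≤ ENNReal.ofReal s) := by
    intro t' ht'
    rw [ENNReal.le_ofReal_iff_toReal_le (measure_ne_top μ _) hs.le]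
    simp [hS, ht']
  have hbdd : BddBelow S := ⟨0, fun x hx => hx.1⟩
  have hne : S.Nonempty := by
    set I := ∫ x, |f x| ∂μ with hI
    have hInn : 0 ≤ I := integral_nonneg fun x => abs_nonneg _
    have ht0 : 0 < (I + s) / s := by positivity
    refine ⟨(I + s) / s, (hmem _ ht0.le).2 ?_⟩
    refine (markov' hf ht0).trans (ENNReal.ofReal_le_ofReal ?_)
    rw [div_div_eq_mul_div, div_le_iff₀ (by positivity)]
    nlinarith
  constructor
  · intro hle
    have hε : ∀ ε : ℝ, 0 < ε → μ {x | t + ε < |f x|} ≤ ENNReal.ofReal s := by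
      intro ε hε
      have hdr : decreasingRearrangement μ f s = sInf S := rfl
      obtain ⟨t', ht'S, ht'lt⟩ := exists_lt_of_csInf_lt hne
        (show sInf S < t + ε by rw [← hdr]; linarith)
      refine le_trans (measure_mono fun x hx => ?_) ((hmem t' ht'S.1).1 ht'S)
      exact lt_of_le_of_lt ht'lt.le hx
    have hU : {x | t < |f x|} = ⋃ n : ℕ, {x | t + 1 / (n + 1) < |f x|} := by
      ext x
      simp only [mem_setOf_eq, mem_iUnion]
      constructor
      · intro hx
        obtain ⟨n, hn⟩ := exists_nat_one_div_lt (ε := |f x| - t) (by linarith)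
        exact ⟨n, by push_cast at hn ⊢; linarith⟩
      · rintro ⟨n, hn⟩
        have : (0:ℝ) < 1 / (n + 1) := by positivity
        linarith
    have hdir : Directed (· ⊆ ·) (fun n : ℕ => {x : α | t + 1 / (n + 1) < |f x|}) := by
      have hmono : Monotone (fun n : ℕ => {x : α | t + 1 / (n + 1) < |f x|}) := by
        intro m n hmn x hx
        simp only [mem_setOf_eq] at *
        have h1 : ((m:ℝ)+1) ≤ (n:ℝ)+1 := by exact_mod_cast Nat.succ_le_succ hmn
        have h2 := one_div_le_one_div_of_le (by positivity : (0:ℝ) < (m:ℝ)+1) h1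
        linarith
      exact hmono.directed_le
    rw [hU, hdir.measure_iUnion]
    exact iSup_le fun n => hε _ (by positivity)
  · intro h
    exact csInf_le hbdd ((hmem t ht).2 h)

lemma dr_lt_iff [IsFiniteMeasure μ] (hf : Integrable f μ) {s t : ℝ} (hs : 0 < s) (ht : 0 ≤ t) :
    t < decreasingRearrangement μ f s ↔ ENNReal.ofReal s < μ {x | t < |f x|} := by
  rw [← not_le, ← not_le, not_iff_not, dr_le_iff hf hs ht]

lemma dr_indicator_measurable [IsFiniteMeasure μ] (hf : Integrable f μ) :
    Measurable ((Ioi (0:ℝ)).indicator (decreasingRearrangement μ f)) := by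
  apply measurable_of_Ioi
  intro c
  rcases le_or_gt 0 c with hc | hc
  · have : (Ioi (0:ℝ)).indicator (decreasingRearrangement μ f) ⁻¹' Ioi c
        = Ioo 0 (μ {x | c < |f x|}).toReal := by
      ext s
      simp only [mem_preimage, mem_Ioi, mem_Ioo, indicator]
      split_ifs with hs
      · rw [dr_lt_iff hf hs hc,
          ENNReal.ofReal_lt_iff_lt_toReal hs.le (measure_ne_top μ _)]
        exact ⟨fun h => ⟨hs, h⟩, fun h => h.2⟩
      · simp only [mem_Ioi, not_lt] at hs
        constructor
        · intro h; linarith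
        · intro h; linarith [h.1]
    rw [this]; exact measurableSet_Ioo
  · have : (Ioi (0:ℝ)).indicator (decreasingRearrangement μ f) ⁻¹' Ioi c = univ := by
      ext s
      simp only [mem_preimage, mem_Ioi, mem_univ, iff_true, indicator]
      split_ifs
      · exact lt_of_lt_of_le hc (dr_nonneg μ f s)
      · exact hc
    rw [this]; exact MeasurableSet.univ

lemma dr_aemeasurable [IsFiniteMeasure μ] (hf : Integrable f μ) {a b : ℝ} (ha : 0 ≤ a) :
    AEMeasurable (decreasingRearrangement μ f) (volume.restrict (Ioo a b)) := by
  refine ⟨(Ioi (0:ℝ)).indicator (decreasingRearrangement μ f),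
    dr_indicator_measurable hf, ?_⟩
  rw [Filter.EventuallyEq, ae_restrict_iff' measurableSet_Ioo]
  exact Filter.Eventually.of_forall fun s hs =>
    (indicator_of_mem (lt_of_le_of_lt ha hs.1 : s ∈ Ioi 0) _).symm

lemma dr_equimeasurable [IsFiniteMeasure μ] (hf : Integrable f μ) {t : ℝ} (ht : 0 ≤ t) :
    volume.restrict (Ioo 0 (μ univ).toReal) {s : ℝ | t < decreasingRearrangement μ f s}
      = μ {x | t < |f x|} := by
  rw [Measure.restrict_apply' measurableSet_Ioo]
  have hdle : (μ {x | t < |f x|}).toReal ≤ (μ univ).toReal :=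
    ENNReal.toReal_mono (measure_ne_top μ _) (measure_mono (subset_univ _))
  have : {s : ℝ | t < decreasingRearrangement μ f s} ∩ Ioo 0 (μ univ).toReal
      = Ioo 0 (μ {x | t < |f x|}).toReal := by
    ext s
    simp only [mem_inter_iff, mem_setOf_eq, mem_Ioo]
    constructor
    · rintro ⟨h1, h2, h3⟩
      refine ⟨h2, ?_⟩
      rw [dr_lt_iff hf h2 ht, ENNReal.ofReal_lt_iff_lt_toReal h2.le (measure_ne_top μ _)] at h1
      exact h1
    · rintro ⟨h1, h2⟩
      refine ⟨?_, h1, lt_of_lt_of_le h2 hdle⟩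
      rw [dr_lt_iff hf h1 ht, ENNReal.ofReal_lt_iff_lt_toReal h1.le (measure_ne_top μ _)]
      exact h2
  rw [this, Real.volume_Ioo, sub_zero, ENNReal.ofReal_toReal (measure_ne_top μ _)]

lemma layercake_equi [IsFiniteMeasure μ] (hf : Integrable f μ) (Φ : ℝ → ℝ)
    (hΦm : Measurable Φ) (hmono : StrictMonoOn Φ (Ici 0)) (hcont : ContinuousOn Φ (Ici 0))
    (h0 : Φ 0 = 0) (hbig : ∀ t, 0 ≤ t → t ≤ Φ t) :
    ∫⁻ x, ENNReal.ofReal (Φ |f x|) ∂μ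
      = ∫⁻ s in Ioo 0 (μ univ).toReal,
          ENNReal.ofReal (Φ (decreasingRearrangement μ f s)) := by
  have hΦnn : ∀ u : ℝ, 0 ≤ u → 0 ≤ Φ u := by
    intro u hu
    rw [← h0]
    exact hmono.monotoneOn (self_mem_Ici) hu hu
  rw [lintegral_eq_lintegral_meas_lt μ
    (Filter.Eventually.of_forall fun x => hΦnn _ (abs_nonneg _))
    (hΦm.comp_aemeasurable hf.abs.aemeasurable),
    lintegral_eq_lintegral_meas_lt _
    (Filter.Eventually.of_forall fun s => hΦnn _ (dr_nonneg μ f s))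
    (hΦm.comp_aemeasurable (dr_aemeasurable hf le_rfl))]
  refine setLIntegral_congr_fun measurableSet_Ioi
    (fun t htt => ?_)
  simp only [mem_Ioi] at htt
  -- find u with Φ u = t
  have hIcc : Icc (Φ 0) (Φ t) ⊆ Φ '' Icc 0 t :=
    intermediate_value_Icc (by linarith [hbig t htt.le])
      (hcont.mono (Icc_subset_Ici_self))
  obtain ⟨u, hu, hΦu⟩ := hIcc ⟨by rw [h0]; exact htt.le, hbig t htt.le⟩
  have hu0 : 0 ≤ u := hu.1
  have hkey : ∀ v : ℝ, 0 ≤ v → (t < Φ v ↔ u < v) := by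
    intro v hv
    constructor
    · intro h
      by_contra hvu
      push_neg at hvu
      have := hmono.monotoneOn hv hu0 hvu
      rw [hΦu] at this
      linarith
    · intro h
      rw [← hΦu]
      exact hmono hu0 hv h
  have e1 : {x : α | t < Φ |f x|} = {x : α | u < |f x|} := by
    ext x; exact hkey _ (abs_nonneg _)
  have e2 : {s : ℝ | t < Φ (decreasingRearrangement μ f s)}
      = {s : ℝ | u < decreasingRearrangement μ f s} := by
    ext s; exact hkey _ (dr_nonneg μ f s)
  rw [e1, e2, dr_equimeasurable hf hu0]
end Aux

section Phi

lemma two_le_e : (2:ℝ) ≤ Real.exp 1 := by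
  have := Real.add_one_le_exp 1
  linarith

lemma one_le_log_e_add {x : ℝ} (hx : 0 ≤ x) : 1 ≤ Real.log (Real.exp 1 + x) := by
  nth_rewrite 1 [← Real.log_exp 1]
  exact Real.log_le_log (Real.exp_pos 1) (by linarith)

lemma phi_measurable (A : ℝ) :
    Measurable (fun u : ℝ => u * Real.log (Real.exp 1 + u / A)) :=
  measurable_id.mul ((measurable_const.add (measurable_id.div_const A)).log)

lemma phi_strictMono {A : ℝ} (hA : 0 < A) :
    StrictMonoOn (fun u : ℝ => u * Real.log (Real.exp 1 + u / A)) (Ici 0) := by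
  intro a ha b hb hab
  simp only [mem_Ici] at ha hb
  have h1 : 1 ≤ Real.log (Real.exp 1 + a / A) := one_le_log_e_add (by positivity)
  have h2 : Real.log (Real.exp 1 + a / A) ≤ Real.log (Real.exp 1 + b / A) := by
    apply Real.log_le_log (by positivity)
    have : a / A ≤ b / A := by gcongr
    linarith
  nlinarith

lemma phi_cont {A : ℝ} (hA : 0 < A) :
    ContinuousOn (fun u : ℝ => u * Real.log (Real.exp 1 + u / A)) (Ici 0) := by
  apply continuousOn_id.mul
  apply ContinuousOn.log
  · exact continuousOn_const.add (continuousOn_id.div_const A)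
  · intro u hu
    simp only [mem_Ici] at hu
    have : (0:ℝ) < Real.exp 1 + u / A := by positivity
    exact this.ne'

lemma phi_big {A : ℝ} (hA : 0 < A) {t : ℝ} (ht : 0 ≤ t) :
    t ≤ t * Real.log (Real.exp 1 + t / A) := by
  nlinarith [one_le_log_e_add (show 0 ≤ t / A by positivity)]

lemma p2 {A u r : ℝ} (hA : 0 < A) (hu : 0 ≤ u) (hr : 0 ≤ r) :
    u * Real.log (Real.exp 1 + r) ≤
      2 * (u * Real.log (Real.exp 1 + u / A)) +
        A * Real.sqrt r * Real.log (Real.exp 1 + r) := by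
  have hlogr : 0 ≤ Real.log (Real.exp 1 + r) := by linarith [one_le_log_e_add hr]
  have hphi : 0 ≤ u * Real.log (Real.exp 1 + u / A) :=
    mul_nonneg hu (by linarith [one_le_log_e_add (show 0 ≤ u / A by positivity)])
  rcases le_or_gt u (A * Real.sqrt r) with h | h
  · have := mul_le_mul_of_nonneg_right h hlogr
    linarith
  · have hsq : Real.sqrt r ≤ u / A := by
      rw [le_div_iff₀ hA]; linarith [mul_comm A (Real.sqrt r)]
    have key : Real.log (Real.exp 1 + r) ≤ 2 * Real.log (Real.exp 1 + u / A) := by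
      have h2 : Real.exp 1 + r ≤ (Real.exp 1 + u / A) ^ 2 := by
        nlinarith [Real.sq_sqrt hr, Real.sqrt_nonneg r, two_le_e,
          Real.exp_pos 1]
      calc Real.log (Real.exp 1 + r) ≤ Real.log ((Real.exp 1 + u / A) ^ 2) :=
            Real.log_le_log (by positivity) h2
        _ = 2 * Real.log (Real.exp 1 + u / A) := by
            rw [Real.log_pow]; norm_num
    have := mul_le_mul_of_nonneg_left key hu
    have hrt : 0 ≤ A * Real.sqrt r * Real.log (Real.exp 1 + r) := by
      have := Real.sqrt_nonneg r; positivity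
    linarith
  
lemma p3 {x : ℝ} (hx : 1 ≤ x) :
    Real.sqrt x * Real.log (Real.exp 1 + x) ≤
      4 * (Real.exp 1 + 1) * x ^ ((3:ℝ)/4) := by
  have hx0 : (0:ℝ) < x := by linarith
  have hex : (0:ℝ) < Real.exp 1 + x := by positivity
  have l1 : Real.log (Real.exp 1 + x) ≤ 4 * (Real.exp 1 + x) ^ ((1:ℝ)/4) := by
    have h := Real.log_le_sub_one_of_pos (show (0:ℝ) < (Real.exp 1 + x) ^ ((1:ℝ)/4) by positivity)
    have hlr : Real.log ((Real.exp 1 + x) ^ ((1:ℝ)/4)) = (1/4) * Real.log (Real.exp 1 + x) :=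
      Real.log_rpow hex _
    rw [hlr] at h
    nlinarith [Real.rpow_nonneg hex.le ((1:ℝ)/4)]
  have l2 : (Real.exp 1 + x) ^ ((1:ℝ)/4) ≤ (Real.exp 1 + 1) * x ^ ((1:ℝ)/4) := by
    have hle : Real.exp 1 + x ≤ (Real.exp 1 + 1) * x := by nlinarith [Real.exp_pos 1]
    calc (Real.exp 1 + x) ^ ((1:ℝ)/4) ≤ ((Real.exp 1 + 1) * x) ^ ((1:ℝ)/4) :=
          Real.rpow_le_rpow hex.le hle (by norm_num)
      _ = (Real.exp 1 + 1) ^ ((1:ℝ)/4) * x ^ ((1:ℝ)/4) :=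
          Real.mul_rpow (by positivity) hx0.le
      _ ≤ (Real.exp 1 + 1) * x ^ ((1:ℝ)/4) := by
          apply mul_le_mul_of_nonneg_right _ (Real.rpow_nonneg hx0.le _)
          nth_rewrite 2 [← Real.rpow_one (Real.exp 1 + 1)]
          exact Real.rpow_le_rpow_of_exponent_le (by nlinarith [Real.exp_pos 1]) (by norm_num)
  have hsqrt : Real.sqrt x = x ^ ((1:ℝ)/2) := Real.sqrt_eq_rpow x
  have hlog_nn : 0 ≤ Real.log (Real.exp 1 + x) := by
    linarith [one_le_log_e_add (show 0 ≤ x by linarith)]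
  calc Real.sqrt x * Real.log (Real.exp 1 + x)
      ≤ x ^ ((1:ℝ)/2) * (4 * ((Real.exp 1 + 1) * x ^ ((1:ℝ)/4))) := by
        rw [hsqrt]
        apply mul_le_mul_of_nonneg_left _ (Real.rpow_nonneg hx0.le _)
        calc Real.log (Real.exp 1 + x) ≤ 4 * (Real.exp 1 + x) ^ ((1:ℝ)/4) := l1
          _ ≤ 4 * ((Real.exp 1 + 1) * x ^ ((1:ℝ)/4)) := by linarith
    _ = 4 * (Real.exp 1 + 1) * (x ^ ((1:ℝ)/2) * x ^ ((1:ℝ)/4)) := by ring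
    _ = 4 * (Real.exp 1 + 1) * x ^ ((3:ℝ)/4) := by
        rw [← Real.rpow_add hx0]; norm_num

end Phi

theorem stmt7 {n : ℕ} (Q : Set (Fin n → ℝ)) (hQm : MeasurableSet Q)
    (hQfin : volume Q < ⊤) (hQpos : 0 < volume Q)
    (f : (Fin n → ℝ) → ℝ) (hf : IntegrableOn f Q)
    (A : ℝ) (hA : A = (volume Q).toReal⁻¹ * ∫ y in Q, |f y|) :
    (volume Q).toReal⁻¹ * ∫ y in Q, |f y| * Real.log (Real.exp 1 + |f y| / A) ≤
      (volume Q).toReal⁻¹ * ∫ s in (0:ℝ)..(volume Q).toReal,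
        decreasingRearrangement (volume.restrict Q) f s *
          Real.log (Real.exp 1 + (volume Q).toReal / s) := by
  have hTpos : 0 < (volume Q).toReal := ENNReal.toReal_pos hQpos.ne' hQfin.ne
  set T := (volume Q).toReal with hT
  set μ := volume.restrict Q with hμ
  haveI : IsFiniteMeasure μ := ⟨by rw [hμ, Measure.restrict_apply_univ]; exact hQfin⟩
  have hfi : Integrable f μ := hf
  have hI : ∫ x, |f x| ∂μ = T * A := by
    rw [hA]
    field_simp
  have hAnn : 0 ≤ A := by
    rw [hA]
    exact mul_nonneg (inv_nonneg.2 ENNReal.toReal_nonneg)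
      (integral_nonneg fun x => abs_nonneg _)
  have hinv_nn : (0:ℝ) ≤ T⁻¹ := inv_nonneg.2 ENNReal.toReal_nonneg
  have hlogT : ∀ s : ℝ, 0 ≤ s → 0 ≤ Real.log (Real.exp 1 + T / s) := by
    intro s hs
    have h1 : 0 ≤ T / s := div_nonneg hTpos.le hs
    linarith [one_le_log_e_add h1]
  rcases eq_or_lt_of_le hAnn with hA0 | hApos
  · -- case A = 0
    have hint0 : ∫ x, |f x| ∂μ = 0 := by rw [hI, ← hA0, mul_zero]
    have hLHS : ∫ y in Q, |f y| * Real.log (Real.exp 1 + |f y| / A) = 0 := by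
      have heq : ∀ y, |f y| * Real.log (Real.exp 1 + |f y| / A) = |f y| := by
        intro y; rw [← hA0, div_zero, add_zero, Real.log_exp, mul_one]
      calc (∫ y in Q, |f y| * Real.log (Real.exp 1 + |f y| / A))
          = ∫ y in Q, |f y| := by simp only [heq]
        _ = 0 := hint0
    rw [hLHS, mul_zero]
    apply mul_nonneg hinv_nn
    apply intervalIntegral.integral_nonneg hTpos.le
    intro u hu
    exact mul_nonneg (dr_nonneg _ _ _) (hlogT u hu.1)
  · -- main case
    have hμuniv : (μ univ).toReal = T := by rw [hμ, Measure.restrict_apply_univ]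
    -- the rearrangement is dominated by A*T/s
    have hdr_le : ∀ s : ℝ, s ∈ Ioo 0 T → decreasingRearrangement μ f s ≤ A * T / s := by
      intro s hs
      have hspos := hs.1
      have htpos : 0 < A * T / s := by positivity
      rw [dr_le_iff hfi hspos htpos.le]
      refine (markov' hfi htpos).trans_eq ?_
      rw [hI]
      congr 1
      field_simp
    have hequi := layercake_equi hfi (fun u => u * Real.log (Real.exp 1 + u / A))
      (phi_measurable A) (phi_strictMono hApos) (phi_cont hApos) (by simp)
      (fun t ht => phi_big hApos ht)
    rw [hμuniv] at hequi
    set L2 := ∫⁻ s in Ioo 0 T, ENNReal.ofReal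
      (decreasingRearrangement μ f s *
        Real.log (Real.exp 1 + decreasingRearrangement μ f s / A)) with hL2
    set L3 := ∫⁻ s in Ioo 0 T, ENNReal.ofReal
      (decreasingRearrangement μ f s * Real.log (Real.exp 1 + T / s)) with hL3
    have hGae : AEMeasurable
        (fun s => decreasingRearrangement μ f s * Real.log (Real.exp 1 + T / s))
        (volume.restrict (Ioo 0 T)) :=
      (dr_aemeasurable hfi le_rfl).mul
        ((measurable_const.add (measurable_const.div measurable_id)).log).aemeasurable
    have hpt : ∀ s ∈ Ioo 0 T,
        decreasingRearrangement μ f s *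
          Real.log (Real.exp 1 + decreasingRearrangement μ f s / A)
          ≤ decreasingRearrangement μ f s * Real.log (Real.exp 1 + T / s) := by
      intro s hs
      have h1 := hdr_le s hs
      have hdrnn := dr_nonneg μ f s
      apply mul_le_mul_of_nonneg_left _ hdrnn
      apply Real.log_le_log (by positivity)
      have h2 : decreasingRearrangement μ f s / A ≤ T / s := by
        rw [div_le_div_iff₀ hApos hs.1]
        calc decreasingRearrangement μ f s * s ≤ (A * T / s) * s :=
              mul_le_mul_of_nonneg_right h1 hs.1.le
          _ = T * A := by rw [div_mul_cancel₀ _ hs.1.ne']; ring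
      linarith
    have hL2L3 : L2 ≤ L3 := by
      apply lintegral_mono_ae
      rw [ae_restrict_iff' measurableSet_Ioo]
      exact Filter.Eventually.of_forall fun s hs => ENNReal.ofReal_le_ofReal (hpt s hs)
    -- majorant bound
    set C : ℝ := 4 * (Real.exp 1 + 1) * A with hC
    have hCnn : 0 ≤ C := by
      have := Real.exp_pos 1
      nlinarith
    have hptG : ∀ s ∈ Ioo 0 T,
        decreasingRearrangement μ f s * Real.log (Real.exp 1 + T / s)
          ≤ 2 * (decreasingRearrangement μ f s *
              Real.log (Real.exp 1 + decreasingRearrangement μ f s / A))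
            + C * (T / s) ^ ((3:ℝ)/4) := by
      intro s hs
      have hrnn : (0:ℝ) ≤ T / s := div_nonneg hTpos.le hs.1.le
      have h2 := p2 (u := decreasingRearrangement μ f s) (r := T / s) hApos
        (dr_nonneg μ f s) hrnn
      have hx1 : (1:ℝ) ≤ T / s := (one_le_div hs.1).2 hs.2.le
      have h3 := mul_le_mul_of_nonneg_left (p3 hx1) hApos.le
      have hsqrtnn := Real.sqrt_nonneg (T / s)
      have hlognn := hlogT s hs.1.le
      rw [hC]
      nlinarith [mul_nonneg (mul_nonneg hApos.le hsqrtnn) hlognn]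
    -- integrability of the majorant
    have hmaj : IntegrableOn (fun s : ℝ => C * (T / s) ^ ((3:ℝ)/4)) (Ioo 0 T) := by
      have hbase : IntegrableOn (fun s : ℝ => s ^ (-(3:ℝ)/4)) (Ioc 0 T) :=
        (intervalIntegral.intervalIntegrable_rpow' (by norm_num)).1
      have hbase1 : IntegrableOn (fun s : ℝ => (C * T ^ ((3:ℝ)/4)) * s ^ (-(3:ℝ)/4))
          (Ioc 0 T) := hbase.const_mul _
      have hbase2 := hbase1.mono_set Ioo_subset_Ioc_self
      apply hbase2.congr_fun _ measurableSet_Ioo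
      intro s hs
      have hneg : s ^ (-(3:ℝ)/4) = (s ^ ((3:ℝ)/4))⁻¹ := by
        rw [← Real.rpow_neg hs.1.le]
        norm_num
      show C * T ^ ((3:ℝ)/4) * s ^ (-(3:ℝ)/4) = C * (T / s) ^ ((3:ℝ)/4)
      rw [hneg, Real.div_rpow hTpos.le hs.1.le]
      field_simp
    have hCint : ∫⁻ s in Ioo 0 T, ENNReal.ofReal (C * (T / s) ^ ((3:ℝ)/4)) < ⊤ :=
      hmaj.lintegral_lt_top
    have hL3le : L3 ≤ 2 * L2 + ∫⁻ s in Ioo 0 T, ENNReal.ofReal (C * (T / s) ^ ((3:ℝ)/4)) := by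
      have step : L3 ≤ ∫⁻ s in Ioo 0 T,
          (2 * ENNReal.ofReal (decreasingRearrangement μ f s *
            Real.log (Real.exp 1 + decreasingRearrangement μ f s / A))
            + ENNReal.ofReal (C * (T / s) ^ ((3:ℝ)/4))) := by
        refine lintegral_mono_ae ?_
        filter_upwards [ae_restrict_mem measurableSet_Ioo] with s hs
        refine le_trans (ENNReal.ofReal_le_ofReal (hptG s hs)) ?_
        refine le_trans (ENNReal.ofReal_add_le) ?_
        apply add_le_add_left
        rw [ENNReal.ofReal_mul (by norm_num : (0:ℝ) ≤ 2)]
        simp [ENNReal.ofReal_ofNat]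
      refine step.trans ?_
      have hmeas : AEMeasurable (fun s : ℝ => 2 * ENNReal.ofReal
          (decreasingRearrangement μ f s *
            Real.log (Real.exp 1 + decreasingRearrangement μ f s / A)))
          (volume.restrict (Ioo 0 T)) := by
        apply AEMeasurable.const_mul
        apply ENNReal.measurable_ofReal.comp_aemeasurable
        exact (dr_aemeasurable hfi le_rfl).mul
          (((measurable_const.add (measurable_id.div_const A)).log).comp_aemeasurable
            (dr_aemeasurable hfi le_rfl))
      rw [lintegral_add_left' hmeas, lintegral_const_mul' _ _ ENNReal.ofNat_ne_top]
    -- Bochner conversions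
    have hLHSconv : ∫ y in Q, |f y| * Real.log (Real.exp 1 + |f y| / A)
        = (∫⁻ x, ENNReal.ofReal (|f x| * Real.log (Real.exp 1 + |f x| / A)) ∂μ).toReal := by
      rw [← hμ]
      apply integral_eq_lintegral_of_nonneg_ae
      · refine Filter.Eventually.of_forall fun x => mul_nonneg (abs_nonneg _) ?_
        have : (0:ℝ) ≤ |f x| / A := by positivity
        linarith [one_le_log_e_add this]
      · exact ((phi_measurable A).comp_aemeasurable hfi.abs.aemeasurable).aestronglyMeasurable
    have hRHSconv : (∫ s in (0:ℝ)..T, decreasingRearrangement μ f s *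
        Real.log (Real.exp 1 + T / s)) = L3.toReal := by
      rw [intervalIntegral.integral_of_le hTpos.le, integral_Ioc_eq_integral_Ioo]
      apply integral_eq_lintegral_of_nonneg_ae
      · filter_upwards [ae_restrict_mem measurableSet_Ioo] with s hs
        exact mul_nonneg (dr_nonneg _ _ _) (hlogT s hs.1.le)
      · exact hGae.aestronglyMeasurable
    rw [hLHSconv, hRHSconv, hequi]
    apply mul_le_mul_of_nonneg_left _ hinv_nn
    by_cases hL2top : L2 = ⊤
    · rw [hL2top]
      simp [ENNReal.toReal_nonneg]
    · have h2L2 : (2 : ENNReal) * L2 ≠ ⊤ := ENNReal.mul_ne_top ENNReal.ofNat_ne_top hL2top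
      have hL3top : L3 ≠ ⊤ := by
        intro h
        rw [h] at hL3le
        exact (ENNReal.add_ne_top.2 ⟨h2L2, hCint.ne⟩) (top_le_iff.1 hL3le)
      exact ENNReal.toReal_mono hL3top hL2L3
end

section
/- Let φ : (0,L) → ℝ be nonnegative, absolutely continuous, increasing, with φ(0⁺)=0 and φ' decreasing (so φ(t) = ∫₀ᵗ φ'(s)ds). Suppose there exist δ ∈ (0,1), γ ∈ (0,1), and C ≥ 1 such that s·φ'(s)·s^{-δ} is almost increasing with constant C on (0,γL). Then t^{-δ}·φ(t) is almost increasing with constant C/δ on (0,γL). -/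
open Set MeasureTheory intervalIntegral

theorem stmt11 (L δ γ C : ℝ) (hL : 0 < L) (hδ0 : 0 < δ) (hδ1 : δ < 1)
    (hγ0 : 0 < γ) (hγ1 : γ < 1) (hC : 1 ≤ C)
    (φ φ' : ℝ → ℝ)
    (hnonneg : ∀ s ∈ Ioo (0:ℝ) L, 0 ≤ φ' s)
    (hmono : MonotoneOn φ (Ioo (0:ℝ) L))
    (hanti : AntitoneOn φ' (Ioo (0:ℝ) L))
    (hderiv : ∀ t ∈ Ioo (0:ℝ) L, HasDerivAt φ (φ' t) t)
    (hrepr : ∀ t ∈ Ioo (0:ℝ) L, φ t = ∫ s in (0:ℝ)..t, φ' s)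
    (hai : ∀ s t, 0 < s → s ≤ t → t < γ * L →
      s * φ' s * s ^ (-δ) ≤ C * (t * φ' t * t ^ (-δ))) :
    ∀ s t, 0 < s → s ≤ t → t < γ * L →
      s ^ (-δ) * φ s ≤ (C / δ) * (t ^ (-δ) * φ t) := by
  intro s t hs hst ht
  have hLt : γ * L < L := by nlinarith
  have ht0 : 0 < t := lt_of_lt_of_le hs hst
  have htL : t < L := ht.trans hLt
  have hsL : s < L := lt_of_le_of_lt hst htL
  have htmem : t ∈ Ioo (0:ℝ) L := ⟨ht0, htL⟩
  have hφ't : 0 ≤ φ' t := hnonneg t htmem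
  set K : ℝ := C * φ' t * t ^ (1 - δ) with hK
  -- pointwise bound
  have hb : ∀ u ∈ Ioc (0:ℝ) t, φ' u ≤ K * u ^ (δ - 1) := by
    intro u hu
    have hu0 := hu.1
    have h := hai u t hu0 hu.2 ht
    have e1 : u * φ' u * u ^ (-δ) = φ' u * u ^ (1 - δ) := by
      rw [show (1:ℝ) - δ = 1 + (-δ) by ring, Real.rpow_add hu0, Real.rpow_one]; ring
    have e2 : C * (t * φ' t * t ^ (-δ)) = K := by
      rw [hK, show (1:ℝ) - δ = 1 + (-δ) by ring, Real.rpow_add ht0, Real.rpow_one]; ring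
    rw [e1, e2] at h
    have hpow : (0:ℝ) ≤ u ^ (δ - 1) := (Real.rpow_pos_of_pos hu0 _).le
    have := mul_le_mul_of_nonneg_right h hpow
    have e3 : u ^ (1 - δ) * u ^ (δ - 1) = 1 := by
      rw [← Real.rpow_add hu0]; norm_num
    calc φ' u = φ' u * (u ^ (1 - δ) * u ^ (δ - 1)) := by rw [e3, mul_one]
      _ = φ' u * u ^ (1 - δ) * u ^ (δ - 1) := by ring
      _ ≤ K * u ^ (δ - 1) := this
  -- measurability of φ' on (0, t]
  have hmeas : AEStronglyMeasurable φ' (volume.restrict (Ioc (0:ℝ) t)) := by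
    have hae : ∀ᵐ u ∂(volume.restrict (Ioc (0:ℝ) t)), deriv φ u = φ' u := by
      refine (ae_restrict_iff' measurableSet_Ioc).2 (ae_of_all _ fun u hu => ?_)
      exact (hderiv u ⟨hu.1, hu.2.trans_lt htL⟩).deriv
    exact (measurable_deriv φ).aestronglyMeasurable.congr hae
  -- integrability of the dominating function
  have hgiv : IntervalIntegrable (fun u : ℝ => K * u ^ (δ - 1)) volume 0 t :=
    (intervalIntegrable_rpow' (by linarith)).const_mul K
  have hgint : IntegrableOn (fun u : ℝ => K * u ^ (δ - 1)) (Ioc (0:ℝ) t) := by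
    rw [intervalIntegrable_iff_integrableOn_Ioc_of_le ht0.le] at hgiv
    exact hgiv
  -- integrability of φ'
  have hint : IntegrableOn φ' (Ioc (0:ℝ) t) := by
    refine hgint.mono' hmeas ?_
    refine (ae_restrict_iff' measurableSet_Ioc).2 (ae_of_all _ fun u hu => ?_)
    rw [Real.norm_eq_abs, abs_of_nonneg (hnonneg u ⟨hu.1, hu.2.trans_lt htL⟩)]
    exact hb u hu
  -- upper bound for φ s
  have hφs : φ s ≤ K * (s ^ δ / δ) := by
    have hints : IntegrableOn φ' (Ioc (0:ℝ) s) :=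
      hint.mono_set (Ioc_subset_Ioc_right hst)
    have h1 : φ s = ∫ u in Ioc (0:ℝ) s, φ' u := by
      rw [hrepr s ⟨hs, hsL⟩, intervalIntegral.integral_of_le hs.le]
    have h2 : ∫ u in Ioc (0:ℝ) s, φ' u ≤ ∫ u in Ioc (0:ℝ) s, K * u ^ (δ - 1) :=
      setIntegral_mono_on hints (hgint.mono_set (Ioc_subset_Ioc_right hst))
        measurableSet_Ioc (fun u hu => hb u (Ioc_subset_Ioc_right hst hu))
    have h3 : ∫ u in Ioc (0:ℝ) s, K * u ^ (δ - 1) = K * (s ^ δ / δ) := by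
      rw [← intervalIntegral.integral_of_le hs.le,
        intervalIntegral.integral_const_mul,
        integral_rpow (Or.inl (by linarith : (-1:ℝ) < δ - 1))]
      rw [show δ - 1 + 1 = δ by ring, Real.zero_rpow (ne_of_gt hδ0)]
      ring
    rw [h1]; rw [h3] at h2; exact h2
  -- lower bound for φ t
  have hφt : t * φ' t ≤ φ t := by
    have h1 : φ t = ∫ u in Ioc (0:ℝ) t, φ' u := by
      rw [hrepr t htmem, intervalIntegral.integral_of_le ht0.le]
    have hcint : IntegrableOn (fun _ : ℝ => φ' t) (Ioc (0:ℝ) t) :=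
      integrableOn_const measure_Ioc_lt_top.ne
    have h2 : ∫ _ in Ioc (0:ℝ) t, φ' t ≤ ∫ u in Ioc (0:ℝ) t, φ' u :=
      setIntegral_mono_on hcint hint measurableSet_Ioc
        (fun u hu => hanti ⟨hu.1, hu.2.trans_lt htL⟩ htmem hu.2)
    have h3 : ∫ _ in Ioc (0:ℝ) t, φ' t = t * φ' t := by
      rw [setIntegral_const, Real.volume_real_Ioc, smul_eq_mul,
        max_eq_left (by linarith)]
      ring_nf
    rw [h1]; rw [h3] at h2; exact h2
  -- combine
  have hsδ : (0:ℝ) < s ^ (-δ) := Real.rpow_pos_of_pos hs _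
  have htδ : (0:ℝ) < t ^ (-δ) := Real.rpow_pos_of_pos ht0 _
  have e1 : s ^ (-δ) * s ^ δ = 1 := by rw [← Real.rpow_add hs]; norm_num
  have e2 : t ^ (1 - δ) = t * t ^ (-δ) := by
    rw [show (1:ℝ) - δ = 1 + (-δ) by ring, Real.rpow_add ht0, Real.rpow_one]
  calc s ^ (-δ) * φ s ≤ s ^ (-δ) * (K * (s ^ δ / δ)) :=
        mul_le_mul_of_nonneg_left hφs hsδ.le
    _ = (C / δ) * (t ^ (-δ) * (t * φ' t)) := by
        rw [hK, e2]
        field_simp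
        linear_combination (φ' t) * e1
    _ ≤ (C / δ) * (t ^ (-δ) * φ t) := by
        refine mul_le_mul_of_nonneg_left
          (mul_le_mul_of_nonneg_left hφt htδ.le) (by positivity)
end

section
/- Suppose g : (0,∞) → [0,∞) is measurable, K : (0,∞) → [0,∞) is nondecreasing, concave-type with K(s) ≤ ‖w‖ := sup_s K(s) < ∞ for all s, and there are constants C, c_w > 0 with: (i) g(r) ≤ C·[(1/r)∫₀^r K(s)/s ds + ∫_r^∞ K(s)/s² ds] for all r > 0, and (ii) ∫₀ᵗ K(s)/s ds ≤ c_w·K(t) for all t in (0,n). Then there is an absolute constant c such that ∫₀ᵗ g(r) dr ≤ c·C·‖w‖·(c_w² + c_w + 1) for all t ∈ (0,n]. -/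
open Set MeasureTheory

theorem aux14 (g K : ℝ → ℝ) (A C cw n : ℝ)
    (hA : 0 < A) (hC : 0 < C) (hcw : 0 < cw) (hn : 0 < n)
    (hg0 : ∀ r, 0 < r → 0 ≤ g r) (hgm : Measurable g)
    (hKm : Measurable K)
    (hKmono : MonotoneOn K (Ioi (0:ℝ)))
    (hKs : AntitoneOn (fun s => K s / s) (Ioi (0:ℝ)))
    (hK0 : ∀ s, 0 < s → 0 ≤ K s) (hKA : ∀ s, 0 < s → K s ≤ A)
    (hgK : ∀ r, 0 < r →
        g r ≤ C * ((1 / r) * ∫ s in (0:ℝ)..r, K s / s + ∫ s in Ioi r, K s / s ^ 2))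
    (hRH : ∀ t ∈ Ioo (0:ℝ) n, ∫ s in (0:ℝ)..t, K s / s ≤ cw * K t) :
    ∀ t ∈ Ioc (0:ℝ) n, ∫ r in (0:ℝ)..t, g r ≤ 2 * C * A * (cw ^ 2 + cw + 1) := by
  intro t ht
  obtain ⟨ht0, htn⟩ := ht
  have hmeas1 : Measurable (fun s : ℝ => K s / s) := hKm.div measurable_id
  have hmeas2 : Measurable (fun s : ℝ => K s / s ^ 2) := hKm.div ((measurable_id.pow_const 2))
  -- integrability of K s / s on middle intervals
  have hint_mid : ∀ a b : ℝ, 0 < a → IntegrableOn (fun s => K s / s) (Ioc a b) := by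
    intro a b ha
    refine Integrable.mono' (g := fun _ => K a / a)
      (integrableOn_const measure_Ioc_lt_top.ne)
      (hmeas1.aestronglyMeasurable.restrict) ?_
    refine (ae_restrict_iff' measurableSet_Ioc).2 (Filter.Eventually.of_forall ?_)
    intro s hs
    have hs0 : 0 < s := lt_trans ha hs.1
    rw [Real.norm_eq_abs, abs_of_nonneg (div_nonneg (hK0 s hs0) hs0.le)]
    exact hKs (mem_Ioi.2 ha) (mem_Ioi.2 hs0) hs.1.le
  -- integrability of K s / s^2 on middle intervals
  have hint_mid2 : ∀ a b : ℝ, 0 < a → IntegrableOn (fun s => K s / s ^ 2) (Ioc a b) := by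
    intro a b ha
    refine Integrable.mono' (g := fun _ => A / a ^ 2)
      (integrableOn_const measure_Ioc_lt_top.ne)
      (hmeas2.aestronglyMeasurable.restrict) ?_
    refine (ae_restrict_iff' measurableSet_Ioc).2 (Filter.Eventually.of_forall ?_)
    intro s hs
    have hs0 : 0 < s := lt_trans ha hs.1
    rw [Real.norm_eq_abs, abs_of_nonneg (div_nonneg (hK0 s hs0) (by positivity))]
    exact div_le_div₀ hA.le (hKA s hs0) (by positivity) (by nlinarith [hs.1, ha])
  -- integrability of K s / s^2 on tails
  have hrpow : ∀ s : ℝ, 0 < s → s ^ (-2 : ℝ) = (s ^ 2)⁻¹ := by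
    intro s hs
    rw [show (-2:ℝ) = ((-2:ℤ):ℝ) by norm_num, Real.rpow_intCast, zpow_neg]
    norm_num
  have hint_tail : ∀ b : ℝ, 0 < b → IntegrableOn (fun s => K s / s ^ 2) (Ioi b) := by
    intro b hb
    refine Integrable.mono' (g := fun s => A * s ^ (-2:ℝ))
      ((integrableOn_Ioi_rpow_of_lt (by norm_num) hb).const_mul A)
      (hmeas2.aestronglyMeasurable.restrict) ?_
    refine (ae_restrict_iff' measurableSet_Ioi).2 (Filter.Eventually.of_forall ?_)
    intro s hs
    have hs0 : 0 < s := lt_trans hb hs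
    show ‖K s / s ^ 2‖ ≤ A * s ^ (-2:ℝ)
    rw [Real.norm_eq_abs, abs_of_nonneg (div_nonneg (hK0 s hs0) (by positivity)), hrpow s hs0]
    rw [div_eq_mul_inv]
    exact mul_le_mul_of_nonneg_right (hKA s hs0) (by positivity)
  have htail_le : ∀ b : ℝ, 0 < b → (∫ s in Ioi b, K s / s ^ 2) ≤ A / b := by
    intro b hb
    have h1 : (∫ s in Ioi b, K s / s ^ 2) ≤ ∫ s in Ioi b, A * s ^ (-2:ℝ) := by
      refine setIntegral_mono_on (hint_tail b hb)
        ((integrableOn_Ioi_rpow_of_lt (by norm_num) hb).const_mul A) measurableSet_Ioi ?_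
      intro s hs
      have hs0 : 0 < s := lt_trans hb hs
      show K s / s ^ 2 ≤ A * s ^ (-2:ℝ)
      rw [hrpow s hs0, div_eq_mul_inv]
      exact mul_le_mul_of_nonneg_right (hKA s hs0) (by positivity)
    have h2 : (∫ s in Ioi b, A * s ^ (-2:ℝ)) = A / b := by
      rw [integral_const_mul, integral_Ioi_rpow_of_lt (by norm_num) hb]
      rw [show (-2:ℝ) + 1 = -1 by norm_num, Real.rpow_neg_one]
      field_simp
    linarith
  by_cases hcase : IntegrableOn (fun s => K s / s) (Ioc 0 t) volume
  · -- integrable case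
    have htne : t ≠ 0 := ne_of_gt ht0
    have hF_nonneg : ∀ u : ℝ, 0 ≤ ∫ s in Ioc (0:ℝ) u, K s / s := by
      intro u
      exact setIntegral_nonneg measurableSet_Ioc fun s hs => div_nonneg (hK0 s hs.1) hs.1.le
    have hRH' : ∀ u ∈ Ioo (0:ℝ) n, (∫ s in Ioc (0:ℝ) u, K s / s) ≤ cw * K u := by
      intro u hu
      have h := hRH u hu
      rwa [intervalIntegral.integral_of_le hu.1.le] at h
    have hFt_le : (∫ s in Ioc (0:ℝ) t, K s / s) ≤ (cw + 1) * A := by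
      have ht2 : (0:ℝ) < t / 2 := by linarith
      have hsplit : Ioc (0:ℝ) t = Ioc 0 (t/2) ∪ Ioc (t/2) t :=
        (Ioc_union_Ioc_eq_Ioc (by linarith) (by linarith)).symm
      have hi1 : IntegrableOn (fun s => K s / s) (Ioc (0:ℝ) (t/2)) volume :=
        hcase.mono_set (Ioc_subset_Ioc_right (by linarith))
      have hi2 := hint_mid (t/2) t ht2
      rw [hsplit, setIntegral_union (Ioc_disjoint_Ioc_of_le le_rfl) measurableSet_Ioc hi1 hi2]
      have hb1 : (∫ s in Ioc (0:ℝ) (t/2), K s / s) ≤ cw * K (t/2) :=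
        hRH' (t/2) ⟨ht2, by linarith⟩
      have hb2 : (∫ s in Ioc (t/2) t, K s / s) ≤ K (t/2) := by
        have hle : (∫ s in Ioc (t/2) t, K s / s) ≤ ∫ _ in Ioc (t/2) t, K (t/2) / (t/2) := by
          refine setIntegral_mono_on hi2 (integrableOn_const measure_Ioc_lt_top.ne)
            measurableSet_Ioc ?_
          intro s hs
          exact hKs (mem_Ioi.2 ht2) (mem_Ioi.2 (lt_trans ht2 hs.1)) hs.1.le
        rw [setIntegral_const, Real.volume_real_Ioc_of_le (by linarith),
          smul_eq_mul] at hle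
        calc (∫ s in Ioc (t/2) t, K s / s) ≤ (t - t/2) * (K (t/2) / (t/2)) := hle
          _ = K (t/2) := by field_simp; ring
      have hKt2A : K (t/2) ≤ A := hKA _ ht2
      have hKt2_0 : 0 ≤ K (t/2) := hK0 _ ht2
      nlinarith
    -- Fubini block
    have hψm : Measurable (fun s : ℝ => ENNReal.ofReal (K s / s ^ 2)) := hmeas2.ennreal_ofReal
    have hfm : Measurable (fun p : ℝ × ℝ => if p.1 < p.2 then ENNReal.ofReal (K p.2 / p.2 ^ 2) else 0) :=
      Measurable.ite (measurableSet_lt measurable_fst measurable_snd)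
        (hψm.comp measurable_snd) measurable_const
    have hswap : (∫⁻ r in Ioc (0:ℝ) t, ∫⁻ s in Ioc (0:ℝ) t,
          (if r < s then ENNReal.ofReal (K s / s ^ 2) else 0))
        = ∫⁻ s in Ioc (0:ℝ) t, ∫⁻ r in Ioc (0:ℝ) t,
          (if r < s then ENNReal.ofReal (K s / s ^ 2) else 0) :=
      lintegral_lintegral_swap hfm.aemeasurable
    have inner_eq : ∀ r ∈ Ioc (0:ℝ) t,
        (∫⁻ s in Ioc (0:ℝ) t, (if r < s then ENNReal.ofReal (K s / s ^ 2) else 0))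
          = ∫⁻ s in Ioc r t, ENNReal.ofReal (K s / s ^ 2) := by
      intro r hr
      have h1 : (fun s => if r < s then ENNReal.ofReal (K s / s ^ 2) else 0)
          = (Ioi r).indicator (fun s => ENNReal.ofReal (K s / s ^ 2)) := by
        funext s; simp [Set.indicator_apply, mem_Ioi]
      rw [h1, lintegral_indicator measurableSet_Ioi,
        Measure.restrict_restrict measurableSet_Ioi]
      have h2 : Ioi r ∩ Ioc 0 t = Ioc r t := by
        ext x
        simp only [mem_inter_iff, mem_Ioi, mem_Ioc]
        constructor
        · rintro ⟨ha, _, hc⟩; exact ⟨ha, hc⟩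
        · rintro ⟨ha, hb⟩; exact ⟨ha, hr.1.trans ha, hb⟩
      rw [h2]
    have inner2_eq : ∀ s ∈ Ioc (0:ℝ) t,
        (∫⁻ r in Ioc (0:ℝ) t, (if r < s then ENNReal.ofReal (K s / s ^ 2) else 0))
          = ENNReal.ofReal s * ENNReal.ofReal (K s / s ^ 2) := by
      intro s hs
      have h1 : (fun r : ℝ => if r < s then ENNReal.ofReal (K s / s ^ 2) else 0)
          = (Iio s).indicator (fun _ => ENNReal.ofReal (K s / s ^ 2)) := by
        funext r; simp [Set.indicator_apply, mem_Iio]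
      rw [h1, lintegral_indicator measurableSet_Iio,
        Measure.restrict_restrict measurableSet_Iio, lintegral_const,
        Measure.restrict_apply MeasurableSet.univ, univ_inter]
      have h2 : Iio s ∩ Ioc 0 t = Ioo 0 s := by
        ext x
        simp only [mem_inter_iff, mem_Iio, mem_Ioc, mem_Ioo]
        constructor
        · rintro ⟨ha, hb, _⟩; exact ⟨hb, ha⟩
        · rintro ⟨ha, hb⟩; exact ⟨hb, ha, (le_of_lt hb).trans hs.2⟩
      rw [h2, Real.volume_Ioo, sub_zero, mul_comm]
    have hΦ : (∫⁻ s in Ioc (0:ℝ) t, ENNReal.ofReal (K s / s))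
        = ENNReal.ofReal (∫ s in Ioc (0:ℝ) t, K s / s) :=
      (ofReal_integral_eq_lintegral_ofReal hcase
        ((ae_restrict_iff' measurableSet_Ioc).2 (Filter.Eventually.of_forall
          fun s hs => div_nonneg (hK0 s hs.1) hs.1.le))).symm
    have hRHS : (∫⁻ s in Ioc (0:ℝ) t, ENNReal.ofReal s * ENNReal.ofReal (K s / s ^ 2))
        = ∫⁻ s in Ioc (0:ℝ) t, ENNReal.ofReal (K s / s) := by
      refine setLIntegral_congr_fun measurableSet_Ioc ?_
      intro s hs
      dsimp only
      rw [← ENNReal.ofReal_mul hs.1.le]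
      congr 1
      have hsne : s ≠ 0 := ne_of_gt hs.1
      field_simp
    have hFub : (∫⁻ r in Ioc (0:ℝ) t, ∫⁻ s in Ioc r t, ENNReal.ofReal (K s / s ^ 2))
        = ENNReal.ofReal (∫ s in Ioc (0:ℝ) t, K s / s) := by
      calc (∫⁻ r in Ioc (0:ℝ) t, ∫⁻ s in Ioc r t, ENNReal.ofReal (K s / s ^ 2))
          = ∫⁻ r in Ioc (0:ℝ) t, ∫⁻ s in Ioc (0:ℝ) t,
              (if r < s then ENNReal.ofReal (K s / s ^ 2) else 0) :=
            setLIntegral_congr_fun measurableSet_Ioc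
              (fun r hr => (inner_eq r hr).symm)
        _ = ∫⁻ s in Ioc (0:ℝ) t, ∫⁻ r in Ioc (0:ℝ) t,
              (if r < s then ENNReal.ofReal (K s / s ^ 2) else 0) := hswap
        _ = ∫⁻ s in Ioc (0:ℝ) t, ENNReal.ofReal s * ENNReal.ofReal (K s / s ^ 2) :=
            setLIntegral_congr_fun measurableSet_Ioc inner2_eq
        _ = ENNReal.ofReal (∫ s in Ioc (0:ℝ) t, K s / s) := by rw [hRHS, hΦ]
    -- measurability and finiteness of the inner lintegral
    have hJtm : Measurable (fun r : ℝ => ∫⁻ s in Ioc r t, ENNReal.ofReal (K s / s ^ 2)) := by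
      have h1 : (fun r : ℝ => ∫⁻ s in Ioc r t, ENNReal.ofReal (K s / s ^ 2))
          = fun r : ℝ => ∫⁻ s, (Ioc r t).indicator (fun s => ENNReal.ofReal (K s / s ^ 2)) s := by
        funext r; rw [lintegral_indicator measurableSet_Ioc]
      rw [h1]
      apply Measurable.lintegral_prod_right
        (f := fun r s => (Ioc r t).indicator (fun s => ENNReal.ofReal (K s / s ^ 2)) s)
      have h2 : (Function.uncurry fun (r s : ℝ) =>
            (Ioc r t).indicator (fun s => ENNReal.ofReal (K s / s ^ 2)) s)
          = fun p : ℝ × ℝ => if p.1 < p.2 ∧ p.2 ≤ t then ENNReal.ofReal (K p.2 / p.2 ^ 2) else 0 := by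
        funext p; simp [Function.uncurry, Set.indicator_apply, mem_Ioc]
      rw [h2]
      exact Measurable.ite ((measurableSet_lt measurable_fst measurable_snd).inter
        (measurable_snd measurableSet_Iic)) (hψm.comp measurable_snd) measurable_const
    have hJt_fin : ∀ᵐ r ∂(volume.restrict (Ioc (0:ℝ) t)),
        (∫⁻ s in Ioc r t, ENNReal.ofReal (K s / s ^ 2)) < ⊤ := by
      refine (ae_restrict_iff' measurableSet_Ioc).2 (Filter.Eventually.of_forall ?_)
      intro r hr
      have hb : (∫⁻ s in Ioc r t, ENNReal.ofReal (K s / s ^ 2))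
          ≤ ∫⁻ _ in Ioc r t, ENNReal.ofReal (A / r ^ 2) := by
        refine setLIntegral_mono' measurableSet_Ioc ?_
        intro s hs
        exact ENNReal.ofReal_le_ofReal (div_le_div₀ hA.le (hKA s (lt_trans hr.1 hs.1))
          (pow_pos hr.1 2) (by nlinarith [hs.1, hr.1]))
      have hfin : (∫⁻ _ in Ioc r t, ENNReal.ofReal (A / r ^ 2)) < ⊤ := by
        rw [lintegral_const, Measure.restrict_apply MeasurableSet.univ, univ_inter]
        exact ENNReal.mul_lt_top ENNReal.ofReal_lt_top measure_Ioc_lt_top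
      exact lt_of_le_of_lt hb hfin
    -- the real-valued truncated integral
    have hJt_eq_ptwise : ∀ r ∈ Ioc (0:ℝ) t,
        (∫ s in Ioc r t, K s / s ^ 2)
          = (∫⁻ s in Ioc r t, ENNReal.ofReal (K s / s ^ 2)).toReal := by
      intro r hr
      rw [integral_eq_lintegral_of_nonneg_ae
        ((ae_restrict_iff' measurableSet_Ioc).2 (Filter.Eventually.of_forall
          fun s hs => div_nonneg (hK0 s (lt_trans hr.1 hs.1)) (by positivity)))
        hmeas2.aestronglyMeasurable.restrict]
    have hJt_int : IntegrableOn (fun r => ∫ s in Ioc r t, K s / s ^ 2) (Ioc (0:ℝ) t) volume := by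
      have h1 : Integrable (fun r => (∫⁻ s in Ioc r t, ENNReal.ofReal (K s / s ^ 2)).toReal)
          (volume.restrict (Ioc (0:ℝ) t)) :=
        integrable_toReal_of_lintegral_ne_top hJtm.aemeasurable
          (by rw [hFub]; exact ENNReal.ofReal_ne_top)
      exact h1.congr ((ae_restrict_iff' measurableSet_Ioc).2 (Filter.Eventually.of_forall
        fun r hr => (hJt_eq_ptwise r hr).symm))
    have hJt_intval : (∫ r in Ioc (0:ℝ) t, ∫ s in Ioc r t, K s / s ^ 2)
        = ∫ s in Ioc (0:ℝ) t, K s / s := by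
      rw [setIntegral_congr_fun measurableSet_Ioc hJt_eq_ptwise,
        integral_toReal hJtm.aemeasurable.restrict hJt_fin, hFub,
        ENNReal.toReal_ofReal (hF_nonneg t)]
    -- pointwise bound
    have hgh : ∀ r ∈ Ioo (0:ℝ) t,
        g r ≤ C * (cw * (K r / r) + ((∫ s in Ioc r t, K s / s ^ 2) + A / t)) := by
      intro r hr
      have hr0 : (0:ℝ) < r := hr.1
      have hrne : r ≠ 0 := ne_of_gt hr0
      have hrn : r < n := lt_of_lt_of_le hr.2 htn
      have hIKr : IntegrableOn (fun s => K s / s) (Ioc (0:ℝ) r) volume :=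
        hcase.mono_set (Ioc_subset_Ioc_right hr.2.le)
      have hJsplit : (∫ s in Ioi r, K s / s ^ 2)
          = (∫ s in Ioc r t, K s / s ^ 2) + ∫ s in Ioi t, K s / s ^ 2 := by
        rw [← setIntegral_union (Ioc_disjoint_Ioi le_rfl) measurableSet_Ioi
          (hint_mid2 r t hr0) (hint_tail t ht0), Ioc_union_Ioi_eq_Ioi hr.2.le]
      have hIval : (∫ s in (0:ℝ)..r, (K s / s + ∫ u in Ioi r, K u / u ^ 2))
          = (∫ s in Ioc (0:ℝ) r, K s / s) + r * ∫ u in Ioi r, K u / u ^ 2 := by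
        rw [intervalIntegral.integral_of_le hr0.le]
        rw [integral_add hIKr (integrableOn_const measure_Ioc_lt_top.ne)]
        congr 1
        rw [setIntegral_const, Real.volume_real_Ioc_of_le (by linarith),
          smul_eq_mul, sub_zero]
      have h0 := hgK r hr0
      rw [hIval] at h0
      have hF_r : (∫ s in Ioc (0:ℝ) r, K s / s) ≤ cw * K r := hRH' r ⟨hr0, hrn⟩
      have htail2 : (∫ s in Ioi r, K s / s ^ 2) ≤ (∫ s in Ioc r t, K s / s ^ 2) + A / t := by
        rw [hJsplit]; exact add_le_add le_rfl (htail_le t ht0)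
      calc g r ≤ C * (1 / r * ((∫ s in Ioc (0:ℝ) r, K s / s)
              + r * ∫ u in Ioi r, K u / u ^ 2)) := h0
        _ = C * (1 / r * (∫ s in Ioc (0:ℝ) r, K s / s) + ∫ u in Ioi r, K u / u ^ 2) := by
            congr 1
            field_simp
        _ ≤ C * (cw * (K r / r) + ((∫ s in Ioc r t, K s / s ^ 2) + A / t)) := by
            refine mul_le_mul_of_nonneg_left (add_le_add ?_ htail2) hC.le
            rw [one_div_mul_eq_div, show cw * (K r / r) = cw * K r / r by ring]
            exact (div_le_div_iff_of_pos_right hr0).2 hF_r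
    -- integrability of the majorant
    have hconst_int : IntegrableOn (fun _ : ℝ => A / t) (Ioc (0:ℝ) t) volume :=
      integrableOn_const measure_Ioc_lt_top.ne
    have hh_int : IntegrableOn
        (fun r => C * (cw * (K r / r) + ((∫ s in Ioc r t, K s / s ^ 2) + A / t)))
        (Ioc (0:ℝ) t) volume :=
      ((hcase.const_mul cw).add (hJt_int.add hconst_int)).const_mul C
    have haet : ∀ᵐ r : ℝ ∂volume, r ≠ t := by
      have hs : {a : ℝ | ¬ a ≠ t} = {t} := by ext a; simp
      rw [ae_iff, hs]
      exact measure_singleton t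
    have hg_int : IntegrableOn g (Ioc (0:ℝ) t) volume := by
      refine Integrable.mono' hh_int hgm.aestronglyMeasurable.restrict ?_
      filter_upwards [ae_restrict_mem measurableSet_Ioc, ae_restrict_of_ae haet] with r hr hne
      rw [Real.norm_eq_abs, abs_of_nonneg (hg0 r hr.1)]
      exact hgh r ⟨hr.1, lt_of_le_of_ne hr.2 hne⟩
    have hg_ae : ∀ᵐ r ∂(volume.restrict (Ioc (0:ℝ) t)),
        g r ≤ C * (cw * (K r / r) + ((∫ s in Ioc r t, K s / s ^ 2) + A / t)) := by
      filter_upwards [ae_restrict_mem measurableSet_Ioc, ae_restrict_of_ae haet] with r hr hne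
      exact hgh r ⟨hr.1, lt_of_le_of_ne hr.2 hne⟩
    rw [intervalIntegral.integral_of_le ht0.le]
    have hmain : (∫ r in Ioc (0:ℝ) t, g r)
        ≤ ∫ r in Ioc (0:ℝ) t, C * (cw * (K r / r) + ((∫ s in Ioc r t, K s / s ^ 2) + A / t)) :=
      integral_mono_ae hg_int hh_int hg_ae
    have hval : (∫ r in Ioc (0:ℝ) t, C * (cw * (K r / r) + ((∫ s in Ioc r t, K s / s ^ 2) + A / t)))
        = C * (cw * (∫ s in Ioc (0:ℝ) t, K s / s) + ((∫ s in Ioc (0:ℝ) t, K s / s) + A)) := by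
      rw [integral_const_mul]
      congr 1
      have e1 : (∫ r in Ioc (0:ℝ) t, (cw * (K r / r) + ((∫ s in Ioc r t, K s / s ^ 2) + A / t)))
          = (∫ r in Ioc (0:ℝ) t, cw * (K r / r))
            + ∫ r in Ioc (0:ℝ) t, ((∫ s in Ioc r t, K s / s ^ 2) + A / t) :=
        integral_add (hcase.const_mul cw) (hJt_int.add hconst_int)
      have e2 : (∫ r in Ioc (0:ℝ) t, ((∫ s in Ioc r t, K s / s ^ 2) + A / t))
          = (∫ r in Ioc (0:ℝ) t, ∫ s in Ioc r t, K s / s ^ 2)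
            + ∫ _ in Ioc (0:ℝ) t, A / t :=
        integral_add hJt_int hconst_int
      have e3 : (∫ _ in Ioc (0:ℝ) t, A / t) = A := by
        rw [setIntegral_const, Real.volume_real_Ioc_of_le (by linarith),
          smul_eq_mul, sub_zero, mul_comm, div_mul_cancel₀ A htne]
      rw [e1, e2, e3, integral_const_mul, hJt_intval]
    have hFt0 := hF_nonneg t
    have hkey : C * (cw * (∫ s in Ioc (0:ℝ) t, K s / s) + ((∫ s in Ioc (0:ℝ) t, K s / s) + A))
        ≤ 2 * C * A * (cw ^ 2 + cw + 1) := by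
      have h1 : cw * (∫ s in Ioc (0:ℝ) t, K s / s) ≤ cw * ((cw + 1) * A) :=
        mul_le_mul_of_nonneg_left hFt_le hcw.le
      nlinarith [sq_nonneg cw, hC.le, hA.le, mul_le_mul_of_nonneg_left
        (add_le_add h1 (add_le_add hFt_le (le_refl A))) hC.le,
        mul_nonneg (mul_nonneg hC.le hA.le) (sq_nonneg cw)]
    rw [hval] at hmain
    linarith [hmain, hkey]
  · -- non-integrable case: g vanishes on (0, t]
    have hg_zero : ∀ r ∈ Ioc (0:ℝ) t, g r = 0 := by
      intro r hr
      have hnotint : ¬ IntervalIntegrable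
          (fun s => K s / s + ∫ u in Ioi r, K u / u ^ 2) volume 0 r := by
        intro hint
        have h1 : IntegrableOn (fun s => K s / s + ∫ u in Ioi r, K u / u ^ 2)
            (Ioc 0 r) volume := (intervalIntegrable_iff_integrableOn_Ioc_of_le hr.1.le).1 hint
        have h2 : IntegrableOn (fun s => K s / s) (Ioc 0 r) volume := by
          have h3 := h1.sub (integrableOn_const
            measure_Ioc_lt_top.ne :
            IntegrableOn (fun _ => ∫ u in Ioi r, K u / u ^ 2) (Ioc 0 r) volume)
          have heq : ((fun s => K s / s + ∫ (u : ℝ) in Ioi r, K u / u ^ 2)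
              - fun _ => ∫ (u : ℝ) in Ioi r, K u / u ^ 2) = fun s => K s / s := by
            funext s; simp
          rwa [IntegrableOn, ← heq]
        apply hcase
        rw [← Ioc_union_Ioc_eq_Ioc hr.1.le hr.2]
        exact h2.union (hint_mid r t hr.1)
      have h4 := hgK r hr.1
      rw [intervalIntegral.integral_undef hnotint] at h4
      simp only [mul_zero] at h4
      exact le_antisymm h4 (hg0 r hr.1)
    rw [intervalIntegral.integral_of_le ht0.le]
    rw [setIntegral_congr_fun measurableSet_Ioc hg_zero]
    simp only [integral_zero]
    positivity
theorem stmt14 :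
    ∃ c > 0, ∀ (g K : ℝ → ℝ) (A C cw n : ℝ),
      0 < A → 0 < C → 0 < cw → 0 < n →
      (∀ r, 0 < r → 0 ≤ g r) → Measurable g →
      MonotoneOn K (Ioi (0:ℝ)) → AntitoneOn (fun s => K s / s) (Ioi (0:ℝ)) →
      (∀ s, 0 < s → 0 ≤ K s) → (∀ s, 0 < s → K s ≤ A) →
      (∀ r, 0 < r →
        g r ≤ C * ((1 / r) * ∫ s in (0:ℝ)..r, K s / s + ∫ s in Ioi r, K s / s ^ 2)) →
      (∀ t ∈ Ioo (0:ℝ) n, ∫ s in (0:ℝ)..t, K s / s ≤ cw * K t) →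
      ∀ t ∈ Ioc (0:ℝ) n,
        ∫ r in (0:ℝ)..t, g r ≤ c * C * A * (cw ^ 2 + cw + 1) := by
  refine ⟨2, by norm_num, ?_⟩
  intro g K A C cw n hA hC hcw hn hg0 hgm hKmono hKs hK0 hKA hgK hRH t ht
  set K' : ℝ → ℝ := fun s => if 0 < s then K s else 0 with hK'def
  have hK'eq : ∀ s : ℝ, 0 < s → K' s = K s := fun s hs => if_pos hs
  have hK'mono : Monotone K' := by
    intro a b hab
    by_cases ha : 0 < a
    · have hb : 0 < b := lt_of_lt_of_le ha hab
      simp only [hK'def, if_pos ha, if_pos hb]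
      exact hKmono (mem_Ioi.2 ha) (mem_Ioi.2 hb) hab
    · simp only [hK'def, if_neg ha]
      by_cases hb : 0 < b
      · simp only [if_pos hb]; exact hK0 b hb
      · simp only [if_neg hb]; exact le_refl 0
  have hK'm : Measurable K' := hK'mono.measurable
  have hinner : ∀ r : ℝ, 0 < r →
      (∫ u in Ioi r, K' u / u ^ 2) = ∫ u in Ioi r, K u / u ^ 2 := by
    intro r hr
    exact setIntegral_congr_fun measurableSet_Ioi fun u hu => by
      rw [hK'eq u (lt_trans hr hu)]
  have hcong1 : ∀ r : ℝ, 0 < r →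
      (∫ s in (0:ℝ)..r, (K' s / s + ∫ u in Ioi r, K' u / u ^ 2))
        = ∫ s in (0:ℝ)..r, (K s / s + ∫ u in Ioi r, K u / u ^ 2) := by
    intro r hr
    refine intervalIntegral.integral_congr ?_
    intro s hs
    rw [uIcc_of_le hr.le] at hs
    rcases eq_or_lt_of_le hs.1 with h | h
    · rw [hinner r hr, ← h]
      simp
    · simp only [hinner r hr, hK'eq s h]
  have hcong2 : ∀ u : ℝ, 0 < u →
      (∫ s in (0:ℝ)..u, K' s / s) = ∫ s in (0:ℝ)..u, K s / s := by
    intro u hu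
    refine intervalIntegral.integral_congr ?_
    intro s hs
    rw [uIcc_of_le hu.le] at hs
    rcases eq_or_lt_of_le hs.1 with h | h
    · rw [← h]; simp
    · simp only [hK'eq s h]
  refine aux14 g K' A C cw n hA hC hcw hn hg0 hgm hK'm ?_ ?_ ?_ ?_ ?_ ?_ t ht
  · intro a ha b hb hab
    rw [hK'eq a ha, hK'eq b hb]
    exact hKmono ha hb hab
  · intro a ha b hb hab
    simp only
    rw [hK'eq a ha, hK'eq b hb]
    exact hKs ha hb hab
  · intro s hs; rw [hK'eq s hs]; exact hK0 s hs
  · intro s hs; rw [hK'eq s hs]; exact hKA s hs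
  · intro r hr
    rw [hcong1 r hr]
    exact hgK r hr
  · intro u hu
    rw [hcong2 u hu.1, hK'eq u hu.1]
    exact hRH u hu
end
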